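/- Let α ∈ (0,1) be the unique solution of √(2π)(1-α²)e^{α²/2}(erf(α/√2)+1) = 2α, and h(t,x) = (1-α²)∫₀^∞ exp(ax - a²t/2) da. Then h(t,x) ≥ x/t for all t > 0 and x ∈ ℝ. -/

import Mathlib

/-!
Substituting `a = b / √t` gives `h t x = (1 - α²) F(x / √t) / √t` with
`F u = ∫₀^∞ exp (b u - b² / 2) db`, so it suffices that `u ≤ (1 - α²) F u` for every `u`.
`F` is convex, being an integral of exponentials of affine functions of `u`, and
`F' u = 1 + u F u` because `(b - u) exp (b u - b² / 2)` is an exact derivative in `b`.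
Completing the square expresses `F` through `erf`, and the equation defining `α` becomes
`(1 - α²) F α = α`. The tangent line of `(1 - α²) F` at `α` then passes through `(α, α)` with slope
`(1 - α²)(1 + α F α) = 1 - α² + α² = 1`: it is the identity, and convexity gives the claim.
-/

open MeasureTheory Real

/-- The error function `erf z = (2/√π) ∫₀^z exp (-s²) ds`. -/
noncomputable def erf (z : ℝ) : ℝ :=
  (2 / Real.sqrt π) * ∫ s in (0 : ℝ)..z, Real.exp (-s ^ 2)

open Set Filter Topology

/-- Unnormalized moment generating function of the half-normal law; it equals
`√(2π) e^{u²/2} Φ(u)`, with `Φ` the standard normal distribution function. -/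
noncomputable def halfNormalMGF (u : ℝ) : ℝ :=
  ∫ b in Ioi (0 : ℝ), exp (b * u - b ^ 2 / 2)

lemma exp_mul_sub_sq_div_two (u b : ℝ) :
    exp (b * u - b ^ 2 / 2) = exp (u ^ 2 / 2) * exp (-(1 / 2) * (b - u) ^ 2) := by
  rw [← exp_add]; ring_nf

lemma integrable_exp_mul_sub_sq_div_two (u : ℝ) :
    Integrable fun b => exp (b * u - b ^ 2 / 2) := by
  simpa only [exp_mul_sub_sq_div_two u] using
    ((integrable_exp_neg_mul_sq (by norm_num : (0 : ℝ) < 1 / 2)).comp_sub_right u).const_mul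
      (exp (u ^ 2 / 2))

lemma integrable_sub_mul_exp_mul_sub_sq_div_two (u : ℝ) :
    Integrable fun b => (b - u) * exp (b * u - b ^ 2 / 2) := by
  refine (((integrable_mul_exp_neg_mul_sq (by norm_num : (0 : ℝ) < 1 / 2)).comp_sub_right
    u).const_mul (exp (u ^ 2 / 2))).congr (.of_forall fun b => ?_)
  dsimp only
  rw [exp_mul_sub_sq_div_two u b]; ring

lemma integrable_mul_exp_mul_sub_sq_div_two (u : ℝ) :
    Integrable fun b => b * exp (b * u - b ^ 2 / 2) := by
  refine ((integrable_sub_mul_exp_mul_sub_sq_div_two u).add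
    ((integrable_exp_mul_sub_sq_div_two u).const_mul u)).congr (.of_forall fun b => ?_)
  simp only [Pi.add_apply]; ring

lemma tendsto_exp_mul_sub_sq_div_two_atTop (u : ℝ) :
    Tendsto (fun b => exp (b * u - b ^ 2 / 2)) atTop (𝓝 0) := by
  refine tendsto_exp_atBot.comp ?_
  have : Tendsto (fun b : ℝ => u - b / 2) atTop atBot :=
    tendsto_atBot_add_const_left _ u
      (tendsto_neg_atTop_atBot.comp (tendsto_id.atTop_div_const two_pos))
  exact (tendsto_id.atTop_mul_atBot₀ this).congr fun b => by simp only [id]; ring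

lemma integral_sub_mul_exp_mul_sub_sq_div_two (u : ℝ) :
    ∫ b in Ioi (0 : ℝ), (b - u) * exp (b * u - b ^ 2 / 2) = 1 := by
  have hderiv : ∀ b ∈ Ici (0 : ℝ), HasDerivAt (fun b => -exp (b * u - b ^ 2 / 2))
      ((b - u) * exp (b * u - b ^ 2 / 2)) b := fun b _ => by
    have := (((hasDerivAt_id b).mul_const u).sub ((hasDerivAt_pow 2 b).div_const 2)).exp.neg
    refine this.congr_deriv ?_
    simp only [Pi.sub_apply, id]
    push_cast
    ring
  simpa using integral_Ioi_of_hasDerivAt_of_tendsto' hderiv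
    (integrable_sub_mul_exp_mul_sub_sq_div_two u).integrableOn
    (tendsto_exp_mul_sub_sq_div_two_atTop u).neg

lemma integral_mul_exp_mul_sub_sq_div_two (u : ℝ) :
    ∫ b in Ioi (0 : ℝ), b * exp (b * u - b ^ 2 / 2) = 1 + u * halfNormalMGF u := by
  rw [halfNormalMGF, ← integral_sub_mul_exp_mul_sub_sq_div_two u, ← integral_const_mul,
    ← integral_add (integrable_sub_mul_exp_mul_sub_sq_div_two u).integrableOn
      ((integrable_exp_mul_sub_sq_div_two u).integrableOn.const_mul u)]
  congr 1 with b
  ring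

lemma halfNormalMGF_tangent_le (a u : ℝ) :
    halfNormalMGF a + (u - a) * (1 + a * halfNormalMGF a) ≤ halfNormalMGF u := by
  have hpt : ∀ b ∈ Ioi (0 : ℝ),
      exp (b * a - b ^ 2 / 2) + (u - a) * (b * exp (b * a - b ^ 2 / 2))
        ≤ exp (b * u - b ^ 2 / 2) := fun b _ => by
    have hsplit : exp (b * u - b ^ 2 / 2) = exp (b * a - b ^ 2 / 2) * exp (b * (u - a)) := by
      rw [← exp_add]; ring_nf
    rw [hsplit]
    nlinarith [add_one_le_exp (b * (u - a)), exp_pos (b * a - b ^ 2 / 2)]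
  have hint : IntegrableOn (fun b => (u - a) * (b * exp (b * a - b ^ 2 / 2))) (Ioi 0) :=
    (integrable_mul_exp_mul_sub_sq_div_two a).integrableOn.const_mul (u - a)
  have := setIntegral_mono_on ((integrable_exp_mul_sub_sq_div_two a).integrableOn.add hint)
    (integrable_exp_mul_sub_sq_div_two u).integrableOn measurableSet_Ioi hpt
  rwa [Pi.add_def, integral_add (integrable_exp_mul_sub_sq_div_two a).integrableOn hint,
    integral_const_mul, integral_mul_exp_mul_sub_sq_div_two] at this

lemma le_one_sub_sq_mul_halfNormalMGF {a : ℝ} (ha : a ^ 2 ≤ 1)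
    (hfix : (1 - a ^ 2) * halfNormalMGF a = a) (u : ℝ) :
    u ≤ (1 - a ^ 2) * halfNormalMGF u :=
  calc u = (1 - a ^ 2) * (halfNormalMGF a + (u - a) * (1 + a * halfNormalMGF a)) := by
        linear_combination -(1 + (u - a) * a) * hfix
    _ ≤ (1 - a ^ 2) * halfNormalMGF u :=
        mul_le_mul_of_nonneg_left (halfNormalMGF_tangent_le a u) (by linarith)

lemma integral_exp_neg_half_mul_sq_eq_erf (c : ℝ) :
    ∫ s in (0 : ℝ)..c, exp (-(1 / 2) * s ^ 2) = sqrt (2 * π) / 2 * erf (c / sqrt 2) := by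
  have hsqrt2 : sqrt 2 ≠ 0 := by positivity
  have hscale := intervalIntegral.integral_comp_div (a := 0) (b := c)
    (fun s => exp (-s ^ 2)) hsqrt2
  have hsq : ∀ s, (s / sqrt 2) ^ 2 = 1 / 2 * s ^ 2 := fun s => by
    rw [div_pow, sq_sqrt zero_le_two]; ring
  simp only [hsq, zero_div, smul_eq_mul] at hscale
  simp only [neg_mul]
  rw [erf, hscale, sqrt_mul zero_le_two]
  field_simp

lemma integral_Ioi_neg_exp_neg_half_mul_sq_eq_erf (c : ℝ) :
    ∫ s in Ioi (-c), exp (-(1 / 2) * s ^ 2) = sqrt (2 * π) / 2 * (erf (c / sqrt 2) + 1) := by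
  have hint := integrable_exp_neg_mul_sq (by norm_num : (0 : ℝ) < 1 / 2)
  rw [← intervalIntegral.integral_interval_add_Ioi hint.integrableOn hint.integrableOn (b := 0),
    integral_gaussian_Ioi, ← neg_zero, ← intervalIntegral.integral_comp_neg]
  simp only [even_two.neg_pow, integral_exp_neg_half_mul_sq_eq_erf]
  norm_num
  ring

lemma halfNormalMGF_eq_erf (c : ℝ) :
    halfNormalMGF c = sqrt (2 * π) / 2 * exp (c ^ 2 / 2) * (erf (c / sqrt 2) + 1) := by
  have hshift := (measurePreserving_sub_right volume c).setIntegral_preimage_emb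
    (measurableEmbedding_subRight c) (fun s => exp (-(1 / 2) * s ^ 2)) (Ioi (-c))
  have hpre : (fun b => b - c) ⁻¹' Ioi (-c) = Ioi 0 := by
    ext b; simp
  rw [hpre, integral_Ioi_neg_exp_neg_half_mul_sq_eq_erf] at hshift
  rw [halfNormalMGF]
  simp_rw [exp_mul_sub_sq_div_two c]
  rw [integral_const_mul, hshift]
  ring

lemma integral_exp_mul_sub_sq_mul_div_two {t : ℝ} (ht : 0 < t) (x : ℝ) :
    ∫ a in Ioi (0 : ℝ), exp (a * x - a ^ 2 * t / 2) = halfNormalMGF (x / sqrt t) / sqrt t := by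
  have hs : 0 < sqrt t := sqrt_pos.mpr ht
  have hscale := integral_comp_mul_left_Ioi (fun b => exp (b * (x / sqrt t) - b ^ 2 / 2)) 0 hs
  rw [mul_zero, smul_eq_mul] at hscale
  rw [halfNormalMGF, div_eq_inv_mul, ← hscale]
  refine setIntegral_congr_fun measurableSet_Ioi fun a _ => ?_
  rw [mul_pow, sq_sqrt ht.le]
  field_simp

/-- With `α ∈ (0,1)` the root of the transcendental equation and
`h t x = (1-α²)∫₀^∞ exp (a*x - a²*t/2) da`, `h` dominates the gain function:
`h t x ≥ x / t` for all `t > 0` and `x ∈ ℝ`. -/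
theorem h_dominates_gain (α : ℝ) (hα : α ∈ Set.Ioo (0 : ℝ) 1)
    (heq : Real.sqrt (2 * π) * (1 - α ^ 2) * Real.exp (α ^ 2 / 2)
      * (erf (α / Real.sqrt 2) + 1) = 2 * α)
    (h : ℝ → ℝ → ℝ)
    (hh : ∀ t x, h t x
      = (1 - α ^ 2) * ∫ a in Set.Ioi (0 : ℝ), Real.exp (a * x - a ^ 2 * t / 2)) :
    ∀ (t x : ℝ), 0 < t → x / t ≤ h t x := by
  intro t x ht
  have hfix : (1 - α ^ 2) * halfNormalMGF α = α := by
    rw [halfNormalMGF_eq_erf]; linarith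
  have hα_sq : α ^ 2 ≤ 1 := by nlinarith [hα.1, hα.2]
  calc x / t = x / sqrt t / sqrt t := by rw [div_div, mul_self_sqrt ht.le]
    _ ≤ (1 - α ^ 2) * halfNormalMGF (x / sqrt t) / sqrt t := by
        gcongr
        exact le_one_sub_sq_mul_halfNormalMGF hα_sq hfix _
    _ = h t x := by rw [hh, integral_exp_mul_sub_sq_mul_div_two ht, mul_div_assoc]
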